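/- arXiv:1308.4186 — 2 statements merged into one kernel-verified Lean document; each statement's English description precedes it below -/
import Mathlib

section
/- Let E be a real inner product space (e.g. Euclidean 3-space). Let P, Q ∈ E, set m := dist P Q, and let ε > 0 satisfy 2ε < m. If p, q ∈ E satisfy dist p P ≤ ε and dist q Q ≤ ε, then the angle θ between the vectors q − p and Q − P satisfies sin θ ≤ 2ε/(m − 2ε); equivalently, θ ≤ arcsin(2ε/(m − 2ε)). (This is the precise form of the lemma: a line piercing two balls of radius ε whose centers are at distance m can deviate angularly from the line connecting the centers by at most an angle that is approximately 2ε/m for small ε.) -/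
/-!
Write `u = q - p` and `w = Q - P`; then `‖u - w‖ ≤ 2ε < ‖w‖`. The law of sines in the triangle
with vertices `0, w, u` gives `sin θ * ‖u‖ ≤ ‖u - w‖`, and `‖u‖ ≥ ‖w‖ - 2ε`, which bounds `sin θ`.
Since `u` is closer to `w` than `0` is, `⟪u, w⟫ > 0`, so `θ < π / 2`, where `arcsin` inverts `sin`.
-/

open InnerProductGeometry Real
open scoped RealInnerProductSpace

namespace InnerProductGeometry

variable {E : Type*} [NormedAddCommGroup E] [InnerProductSpace ℝ E]

theorem sin_angle_mul_norm_le_norm_sub (u w : E) : sin (angle u w) * ‖u‖ ≤ ‖u - w‖ := by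
  rw [sin_angle_mul_norm_eq_sin_angle_mul_norm]
  exact mul_le_of_le_one_left (norm_nonneg _) (sin_le_one _)

theorem inner_pos_of_norm_sub_lt {u w : E} (h : ‖u - w‖ < ‖w‖) : 0 < ⟪u, w⟫ := by
  have hsq := norm_sub_sq_real u w
  nlinarith [norm_nonneg (u - w), sq_nonneg ‖u‖]

theorem angle_lt_pi_div_two_of_norm_sub_lt {u w : E} (h : ‖u - w‖ < ‖w‖) :
    angle u w < π / 2 := by
  have hinner := inner_pos_of_norm_sub_lt h
  have hu : u ≠ 0 := by
    rintro rfl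
    simp at hinner
  have hw : 0 < ‖w‖ := (norm_nonneg _).trans_lt h
  exact arccos_lt_pi_div_two.2 (div_pos hinner (mul_pos (norm_pos_iff.2 hu) hw))

variable {u w : E} {δ : ℝ}

theorem sin_angle_le_div_of_norm_sub_le (hd : ‖u - w‖ ≤ δ) (hδ : δ < ‖w‖) :
    sin (angle u w) ≤ δ / (‖w‖ - δ) := by
  have hu : ‖w‖ - δ ≤ ‖u‖ := by
    linarith [norm_sub_norm_le w u, norm_sub_rev w u]
  rw [le_div_iff₀ (sub_pos.2 hδ)]
  calc sin (angle u w) * (‖w‖ - δ) ≤ sin (angle u w) * ‖u‖ :=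
        mul_le_mul_of_nonneg_left hu (sin_angle_nonneg u w)
    _ ≤ ‖u - w‖ := sin_angle_mul_norm_le_norm_sub u w
    _ ≤ δ := hd

theorem angle_le_arcsin_of_norm_sub_le (hd : ‖u - w‖ ≤ δ) (hδ : δ < ‖w‖) :
    angle u w ≤ arcsin (δ / (‖w‖ - δ)) :=
  (le_arcsin_iff_sin_le' ⟨by linarith [angle_nonneg u w, pi_pos],
    (angle_lt_pi_div_two_of_norm_sub_lt (hd.trans_lt hδ)).le⟩).2
    (sin_angle_le_div_of_norm_sub_le hd hδ)

end InnerProductGeometry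

theorem two_disk_angular_deviation_general {E : Type*} [NormedAddCommGroup E] [InnerProductSpace ℝ E]
    (P Q p q : E) (ε : ℝ) (hm : 2 * ε < dist P Q)
    (hp : dist p P ≤ ε) (hq : dist q Q ≤ ε) :
    Real.sin (angle (q - p) (Q - P)) ≤ 2 * ε / (dist P Q - 2 * ε) ∧
      angle (q - p) (Q - P) ≤ Real.arcsin (2 * ε / (dist P Q - 2 * ε)) := by
  have hd : ‖(q - p) - (Q - P)‖ ≤ 2 * ε := by
    rw [← dist_eq_norm, two_mul]
    exact dist_sub_sub_le_of_le hq hp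
  rw [dist_comm, dist_eq_norm] at hm ⊢
  exact ⟨sin_angle_le_div_of_norm_sub_le hd hm, angle_le_arcsin_of_norm_sub_le hd hm⟩

/-- A line piercing two balls of radius `ε` whose centers `P, Q` are at distance `m > 2ε`
can deviate angularly from the line connecting the centers by at most
`arcsin (2ε / (m - 2ε))`. -/
theorem two_disk_angular_deviation {E : Type*} [NormedAddCommGroup E] [InnerProductSpace ℝ E]
    (P Q p q : E) (ε : ℝ) (hε : 0 < ε) (hm : 2 * ε < dist P Q)
    (hp : dist p P ≤ ε) (hq : dist q Q ≤ ε) :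
    Real.sin (angle (q - p) (Q - P)) ≤ 2 * ε / (dist P Q - 2 * ε) ∧
      angle (q - p) (Q - P) ≤ Real.arcsin (2 * ε / (dist P Q - 2 * ε)) :=
  two_disk_angular_deviation_general P Q p q ε hm hp hq
end

section
/- (Lower bound of Lemma 2.) In the Euclidean plane, let A ≠ B and let s be the line through A and B (the affine span of {A, B}). Let O be a point not on s and set h := infDist O s. Let 0 < ε < h, let p be a point with dist p O ≤ ε, let a be a point such that a and O lie strictly on opposite sides of s, and let v be a point such that p lies on the segment from v to a. Then infDist v s ≥ h − ε. (In the interlocking construction: if a link va of the 2-chain crosses the line AB of the triangle frame and passes through the ε-ball at the bottom corner O, then the apex v stays at distance at least h − ε from the line AB.) -/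
/-!
Let `f` be the signed distance to `s`, oriented so that `f O = infDist O s = h`. It is affine,
1-Lipschitz and bounded above by the distance to `s`. Hence `f p ≥ h - ε > 0`, while `f a ≤ 0`
because `a` lies on the other side of `s`. As `p` lies between `v` and `a`, the affine function
`f` is at least `f p` at one of the endpoints, and this cannot be `a`; so
`infDist v s ≥ f v ≥ f p ≥ h - ε`.
-/

open Metric EuclideanGeometry

section OrderedField

variable {R : Type*} [Field R] [LinearOrder R] [IsStrictOrderedRing R]

theorem Wbtw.min_le {x y z : R} (h : Wbtw R x y z) : min x z ≤ y := by
  rw [← mem_segment_iff_wbtw, segment_eq_uIcc] at h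
  exact h.1

theorem Wbtw.le_max {x y z : R} (h : Wbtw R x y z) : y ≤ max x z := by
  rw [← mem_segment_iff_wbtw, segment_eq_uIcc] at h
  exact h.2

variable {V P : Type*} [AddCommGroup V] [Module R V] [AddTorsor V P]

theorem AffineSubspace.WOppSide.apply_nonpos {s : AffineSubspace R P} {f : P →ᵃ[R] R}
    (hf : ∀ q ∈ s, f q = 0) {x y : P} (h : s.WOppSide x y) (hy : 0 < f y) : f x ≤ 0 := by
  obtain ⟨q, hq, hxqy⟩ := wOppSide_iff_exists_wbtw.1 h
  have := (hxqy.map f).min_le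
  rw [hf q hq, min_le_iff] at this
  exact this.resolve_right hy.not_ge

end OrderedField

namespace AffineSubspace

variable {V P : Type*} [NormedAddCommGroup V] [InnerProductSpace ℝ V] [MetricSpace P]
  [NormedAddTorsor V P] (s : AffineSubspace ℝ P) [Nonempty s] [s.direction.HasOrthogonalProjection]

theorem signedInfDist_apply_self_eq_infDist (p : P) : s.signedInfDist p p = infDist p s := by
  rw [signedInfDist_apply_self, ← dist_eq_norm_vsub, dist_orthogonalProjection_eq_infDist]

theorem signedInfDist_le_infDist (p x : P) : s.signedInfDist p x ≤ infDist x s := by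
  rw [signedInfDist_eq_signedDist_orthogonalProjection, ← dist_orthogonalProjection_eq_infDist,
    dist_comm]
  exact signedDist_le_dist _ _ _

theorem signedInfDist_sub_signedInfDist_le_dist (p x y : P) :
    s.signedInfDist p x - s.signedInfDist p y ≤ dist y x := by
  rw [signedInfDist_def, signedDist_triangle_left]
  exact signedDist_le_dist _ _ _

variable {s} in
theorem sub_le_infDist_of_wbtw_of_wOppSide {o p a v : P} {ε : ℝ} (hεo : ε < infDist o s)
    (hpo : dist p o ≤ ε) (hao : s.WOppSide a o) (hvpa : Wbtw ℝ v p a) :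
    infDist o s - ε ≤ infDist v s := by
  set f := s.signedInfDist o
  have hε₀ : 0 ≤ ε := dist_nonneg.trans hpo
  have hfo : f o = infDist o s := s.signedInfDist_apply_self_eq_infDist o
  have hfp : infDist o s - ε ≤ f p := by
    have : f o - f p ≤ dist p o := s.signedInfDist_sub_signedInfDist_le_dist o o p
    linarith
  have hfa : f a ≤ 0 :=
    hao.apply_nonpos (f := f.toAffineMap) (fun q hq => signedInfDist_apply_of_mem o hq)
      (by rw [ContinuousAffineMap.coe_toAffineMap, hfo]; linarith)
  have hfv : f p ≤ f v := by
    have : f p ≤ max (f v) (f a) := (hvpa.map f.toAffineMap).le_max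
    exact (le_max_iff.1 this).resolve_right fun hpa => by linarith
  calc infDist o s - ε ≤ f p := hfp
    _ ≤ f v := hfv
    _ ≤ infDist v s := s.signedInfDist_le_infDist o v

end AffineSubspace

theorem apex_distance_lower_bound_general (A B O p a v : EuclideanSpace ℝ (Fin 2))
    (ε : ℝ)
    (hεh : ε < Metric.infDist O (affineSpan ℝ {A, B} : Set (EuclideanSpace ℝ (Fin 2))))
    (hp : dist p O ≤ ε)
    (hside : (affineSpan ℝ {A, B}).SOppSide a O)
    (hseg : p ∈ segment ℝ v a) :
    Metric.infDist v (affineSpan ℝ {A, B} : Set (EuclideanSpace ℝ (Fin 2))) ≥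
      Metric.infDist O (affineSpan ℝ {A, B} : Set (EuclideanSpace ℝ (Fin 2))) - ε := by
  have : Nonempty (affineSpan ℝ {A, B}) := ⟨⟨A, mem_affineSpan ℝ (by simp)⟩⟩
  exact AffineSubspace.sub_le_infDist_of_wbtw_of_wOppSide hεh hp hside.wOppSide
    (mem_segment_iff_wbtw.1 hseg)

/-- Lower bound of Lemma 2: if the link `va` of the 2-chain crosses the line `AB`
(from the side opposite to `O`) and passes through the `ε`-ball at the bottom corner `O`,
then the apex `v` stays at distance at least `h - ε` from the line `AB`. -/
theorem apex_distance_lower_bound (A B O p a v : EuclideanSpace ℝ (Fin 2)) (hAB : A ≠ B)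
    (hO : O ∉ affineSpan ℝ {A, B}) (ε : ℝ) (hε : 0 < ε)
    (hεh : ε < Metric.infDist O (affineSpan ℝ {A, B} : Set (EuclideanSpace ℝ (Fin 2))))
    (hp : dist p O ≤ ε)
    (hside : (affineSpan ℝ {A, B}).SOppSide a O)
    (hseg : p ∈ segment ℝ v a) :
    Metric.infDist v (affineSpan ℝ {A, B} : Set (EuclideanSpace ℝ (Fin 2))) ≥
      Metric.infDist O (affineSpan ℝ {A, B} : Set (EuclideanSpace ℝ (Fin 2))) - ε :=
  apex_distance_lower_bound_general A B O p a v ε hεh hp hside hseg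
end
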